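/- arXiv:math/0406352 — 2 statements merged into one kernel-verified Lean document; each statement's English description precedes it below -/
import Mathlib

section
/- Let H be an associative unital ℂ-algebra and E a ℂ-vector space which is a unital left H-module with ℂ-bilinear action. Let U ⊆ E be a balanced, convex, absorbent subset which is H-stable (for every h ∈ H there exists C > 0 with h•U ⊆ C•U). Then the set W = {h ∈ H : h•U ⊆ U} is balanced, convex, absorbent in H, and idempotent, i.e., W·W ⊆ W (where W·W = {w₁w₂ : w₁, w₂ ∈ W}). -/
open Pointwise Set

section SetOfSmulSubset

variable {H E : Type*}

theorem setOf_smul_subset_mul_self_subset [Monoid H] [MulAction H E] (U : Set E) :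
    {h : H | h • U ⊆ U} * {h : H | h • U ⊆ U} ⊆ {h : H | h • U ⊆ U} := by
  rintro _ ⟨g, hg, k, hk, rfl⟩
  change (g * k) • U ⊆ U
  rw [mul_smul]
  exact (smul_set_mono hk).trans hg

theorem Balanced.setOf_smul_subset {𝕜 : Type*} [SeminormedRing 𝕜] [SMul 𝕜 H] [SMul 𝕜 E]
    [SMul H E] [IsScalarTower 𝕜 H E] {U : Set E} (hU : Balanced 𝕜 U) :
    Balanced 𝕜 {h : H | h • U ⊆ U} := by
  rintro a ha _ ⟨g, hg, rfl⟩
  change (a • g) • U ⊆ U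
  rw [smul_assoc]
  exact (smul_set_mono hg).trans (hU a ha)

theorem Convex.setOf_smul_subset {𝕜 : Type*} [Semiring 𝕜] [PartialOrder 𝕜] [Semiring H]
    [AddCommMonoid E] [Module H E] [Module 𝕜 H] [Module 𝕜 E] [IsScalarTower 𝕜 H E]
    {U : Set E} (hU : Convex 𝕜 U) : Convex 𝕜 {h : H | h • U ⊆ U} := by
  rintro g hg k hk s t hs ht hst _ ⟨u, hu, rfl⟩
  change (s • g + t • k) • u ∈ U
  rw [add_smul, smul_assoc, smul_assoc]
  exact hU (hg (smul_mem_smul_set hu)) (hk (smul_mem_smul_set hu)) hs ht hst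

theorem Balanced.absorbs_singleton_setOf_smul_subset {𝕜 : Type*} [NormedDivisionRing 𝕜]
    [AddCommGroup H] [Module 𝕜 H] [MulAction 𝕜 E] [SMul H E] [IsScalarTower 𝕜 H E]
    {U : Set E} (hU : Balanced 𝕜 U) {x : H} {c : 𝕜} (hc : c ≠ 0) (hxU : x • U ⊆ c • U) :
    Absorbs 𝕜 {h : H | h • U ⊆ U} {x} := by
  have hmem : x ∈ c • {h : H | h • U ⊆ U} := by
    refine (mem_smul_set_iff_inv_smul_mem₀ hc _ _).2 ?_
    change (c⁻¹ • x) • U ⊆ U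
    rw [smul_assoc]
    exact (smul_set_mono hxU).trans (inv_smul_smul₀ hc U).subset
  exact .of_norm ⟨‖c‖, fun a ha => singleton_subset_iff.2 <| hU.setOf_smul_subset.smul_mono ha hmem⟩

end SetOfSmulSubset

theorem arens_michael_stmt8_general {H : Type*} [Ring H] [Algebra ℂ H]
    {E : Type*} [AddCommGroup E] [Module ℂ E] [Module ℝ E] [IsScalarTower ℝ ℂ E]
    [Module H E] [IsScalarTower ℂ H E]
    (U : Set E) (hUbal : Balanced ℂ U) (hUconv : Convex ℝ U)
    (hUstable : ∀ h : H, ∃ C : ℝ, 0 < C ∧ h • U ⊆ C • U) :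
    Balanced ℂ {h : H | h • U ⊆ U} ∧ Convex ℝ {h : H | h • U ⊆ U} ∧
      Absorbent ℂ {h : H | h • U ⊆ U} ∧
      {h : H | h • U ⊆ U} * {h : H | h • U ⊆ U} ⊆ {h : H | h • U ⊆ U} := by
  have : IsScalarTower ℝ H E := .to₁₃₄ ℝ ℂ H E
  refine ⟨hUbal.setOf_smul_subset, hUconv.setOf_smul_subset, fun h => ?_,
    setOf_smul_subset_mul_self_subset U⟩
  obtain ⟨C, hC, hhU⟩ := hUstable h
  have hCU : C • U = (C : ℂ) • U := by
    simp only [← image_smul, RCLike.real_smul_eq_coe_smul (K := ℂ)]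
    rfl
  rw [hCU] at hhU
  exact hUbal.absorbs_singleton_setOf_smul_subset (Complex.ofReal_ne_zero.2 hC.ne') hhU

/-- Let `H` be an associative unital `ℂ`-algebra and `E` a `ℂ`-vector space which is a
unital left `H`-module with `ℂ`-bilinear action. Let `U ⊆ E` be a balanced, convex,
absorbent subset which is `H`-stable (for every `h ∈ H` there is `C > 0` with
`h • U ⊆ C • U`). Then `W = {h : H | h • U ⊆ U}` is balanced, convex, absorbent in `H`,
and idempotent (`W * W ⊆ W`). -/
theorem arens_michael_stmt8 {H : Type*} [Ring H] [Algebra ℂ H]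
    [Module ℝ H] [IsScalarTower ℝ ℂ H]
    {E : Type*} [AddCommGroup E] [Module ℂ E] [Module ℝ E] [IsScalarTower ℝ ℂ E]
    [Module H E] [IsScalarTower ℂ H E] [SMulCommClass ℂ H E]
    (U : Set E) (hUbal : Balanced ℂ U) (hUconv : Convex ℝ U) (hUabs : Absorbent ℂ U)
    (hUstable : ∀ h : H, ∃ C : ℝ, 0 < C ∧ h • U ⊆ C • U) :
    Balanced ℂ {h : H | h • U ⊆ U} ∧ Convex ℝ {h : H | h • U ⊆ U} ∧
      Absorbent ℂ {h : H | h • U ⊆ U} ∧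
      {h : H | h • U ⊆ U} * {h : H | h • U ⊆ U} ⊆ {h : H | h • U ⊆ U} :=
  arens_michael_stmt8_general U hUbal hUconv hUstable
end

section
/- Let U ⊆ A be an absolutely convex idempotent subset (U·U ⊆ U) and V ⊆ H an absolutely convex idempotent subset (V·V ⊆ V). Define W = {w ∈ H : μ(w⊗u) ∈ U for every u ∈ U} and V' = Δ⁻¹(Γ(W⊗V)) ⊆ H. Then the smash multiplication maps Γ(U⊗V') and Γ(U⊗V) into Γ(U⊗V): for every x ∈ Γ(U⊗V') and y ∈ Γ(U⊗V) one has m#(x⊗y) ∈ Γ(U⊗V). -/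
open TensorProduct

noncomputable section

/- Setup: `H` is a bialgebra over `ℂ`; `A` is an associative unital `ℂ`-algebra equipped
with a left `H`-module structure whose action is `ℂ`-bilinear (`1_H` acts as the identity,
since this is a module structure). -/
variable (H A : Type*) [Ring H] [Bialgebra ℂ H]
  [Ring A] [Algebra ℂ A] [Module H A] [IsScalarTower ℂ H A] [SMulCommClass ℂ H A]

/-- The action of `H` on `A` as a `ℂ`-bilinear map. -/
def actB : H →ₗ[ℂ] A →ₗ[ℂ] A where
  toFun h :=
    { toFun := fun a => h • a
      map_add' := fun a b => smul_add h a b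
      map_smul' := fun c a => smul_comm h c a }
  map_add' h₁ h₂ := LinearMap.ext fun a => add_smul h₁ h₂ a
  map_smul' c h := LinearMap.ext fun a => smul_assoc c h a

/-- The action map `μ : H ⊗ A → A`. -/
def mu : H ⊗[ℂ] A →ₗ[ℂ] A := TensorProduct.lift (actB H A)

/-- `τ : H ⊗ A → A ⊗ H`, the composite `(μ ⊗ id_H) ∘ (id_H ⊗ σ) ∘ (Δ ⊗ id_A)`, where
`σ : H ⊗ A → A ⊗ H` is the tensor flip and `Δ` is the comultiplication of `H`. -/
def tau : H ⊗[ℂ] A →ₗ[ℂ] A ⊗[ℂ] H :=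
  LinearMap.rTensor H (mu H A)
    ∘ₗ (TensorProduct.assoc ℂ H A H).symm.toLinearMap
    ∘ₗ LinearMap.lTensor H (TensorProduct.comm ℂ H A).toLinearMap
    ∘ₗ (TensorProduct.assoc ℂ H H A).toLinearMap
    ∘ₗ LinearMap.rTensor A (Coalgebra.comul (R := ℂ) (A := H))

/-- The smash multiplication `m# : (A ⊗ H) ⊗ (A ⊗ H) → A ⊗ H`, the composite
`(m_A ⊗ m_H) ∘ (id_A ⊗ τ ⊗ id_H)`. -/
def smashMul : (A ⊗[ℂ] H) ⊗[ℂ] (A ⊗[ℂ] H) →ₗ[ℂ] A ⊗[ℂ] H :=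
  TensorProduct.map (LinearMap.mul' ℂ A) (LinearMap.mul' ℂ H)
    ∘ₗ (TensorProduct.assoc ℂ A A (H ⊗[ℂ] H)).symm.toLinearMap
    ∘ₗ LinearMap.lTensor A
        ((TensorProduct.assoc ℂ A H H).toLinearMap
          ∘ₗ LinearMap.rTensor H (tau H A)
          ∘ₗ (TensorProduct.assoc ℂ H A H).symm.toLinearMap)
    ∘ₗ (TensorProduct.assoc ℂ A H (A ⊗[ℂ] H)).toLinearMap

/-- `id_A ⊗ ε : A ⊗ H → A ⊗ ℂ ≅ A`, where `ε` is the counit of `H`. -/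
def epsA : A ⊗[ℂ] H →ₗ[ℂ] A :=
  (TensorProduct.rid ℂ A).toLinearMap
    ∘ₗ LinearMap.lTensor A (Coalgebra.counit (R := ℂ) (A := H))

/-- The absolutely convex hull with its December 2024 Mathlib meaning: the smallest set
containing `s` that is `𝕜`-balanced and `ℝ`-convex. -/
def absConvexHullOld (𝕜 : Type*) {E : Type*} [SeminormedRing 𝕜] [SMul 𝕜 E] [SMul ℝ E]
    [AddCommMonoid E] (s : Set E) : Set E :=
  ⋂₀ {t : Set E | s ⊆ t ∧ (Balanced 𝕜 t ∧ Convex ℝ t)}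

/-
On pure tensors the smash product is `(a ⊗ h)(b ⊗ k) = ∑ a (h₁ • b) ⊗ h₂ k` with `Δ h = ∑ h₁ ⊗ h₂`.
For `a, b ∈ U`, `k ∈ V` and `h ∈ V'` the element `Δ h` lies in `Γ(W ⊗ V)`, and the linear map
`w ⊗ v ↦ a (w • b) ⊗ v k` sends `W ⊗ V` into `U ⊗ V` by idempotency of `U` and `V`, hence sends
`Γ(W ⊗ V)` into `Γ(U ⊗ V)`. Since `m#` is bilinear and the preimage of an absolutely convex set
under a linear map is absolutely convex, the statement on generators extends to the hulls.
-/

section AbsConvexHullOld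

variable {E F G : Type*} [AddCommGroup E] [Module ℂ E] [Module ℝ E]

lemma subset_absConvexHullOld {s : Set E} : s ⊆ absConvexHullOld ℂ s :=
  fun _ hx => Set.mem_sInter.2 fun _ ht => ht.1 hx

lemma absConvexHullOld_min {s t : Set E} (hst : s ⊆ t) (hbal : Balanced ℂ t)
    (hconv : Convex ℝ t) : absConvexHullOld ℂ s ⊆ t :=
  Set.sInter_subset_of_mem ⟨hst, hbal, hconv⟩

lemma balanced_absConvexHullOld {s : Set E} : Balanced ℂ (absConvexHullOld ℂ s) :=
  Balanced.sInter fun _ ht => ht.2.1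

lemma convex_absConvexHullOld {s : Set E} : Convex ℝ (absConvexHullOld ℂ s) :=
  convex_sInter fun _ ht => ht.2.2

variable [IsScalarTower ℝ ℂ E]
  [AddCommGroup F] [Module ℂ F] [Module ℝ F] [IsScalarTower ℝ ℂ F]
  [AddCommGroup G] [Module ℂ G] [Module ℝ G] [IsScalarTower ℝ ℂ G]

lemma mapsTo_absConvexHullOld (f : E →ₗ[ℂ] F) {s : Set E} {t : Set F}
    (h : Set.MapsTo f s (absConvexHullOld ℂ t)) :
    Set.MapsTo f (absConvexHullOld ℂ s) (absConvexHullOld ℂ t) :=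
  absConvexHullOld_min h (balanced_absConvexHullOld.mulActionHom_preimage f.toMulActionHom)
    (convex_absConvexHullOld.linear_preimage (f.restrictScalars ℝ))

lemma bilinear_mem_absConvexHullOld (B : E →ₗ[ℂ] F →ₗ[ℂ] G) {s : Set E} {t : Set F}
    {u : Set G} (h : ∀ x ∈ s, ∀ y ∈ t, B x y ∈ absConvexHullOld ℂ u) :
    ∀ x ∈ absConvexHullOld ℂ s, ∀ y ∈ absConvexHullOld ℂ t, B x y ∈ absConvexHullOld ℂ u := by
  have hs : s ⊆ ⋂ y ∈ absConvexHullOld ℂ t, B.flip y ⁻¹' absConvexHullOld ℂ u := fun x hx =>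
    Set.mem_iInter₂.2 fun _ hy => mapsTo_absConvexHullOld (B x) (h x hx) hy
  intro x hx y hy
  refine Set.mem_iInter₂.1 (absConvexHullOld_min hs ?_ ?_ hx) y hy
  · exact balanced_iInter₂ fun y _ =>
      balanced_absConvexHullOld.mulActionHom_preimage (B.flip y).toMulActionHom
  · exact convex_iInter₂ fun y _ =>
      convex_absConvexHullOld.linear_preimage ((B.flip y).restrictScalars ℝ)

end AbsConvexHullOld

section SmashProduct

omit [SMulCommClass ℂ H A]

lemma smashMul_tmul (a : A) (h : H) (b : A) (k : H) :
    smashMul H A ((a ⊗ₜ[ℂ] h) ⊗ₜ[ℂ] (b ⊗ₜ[ℂ] k)) =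
      map (LinearMap.mulLeft ℂ a ∘ₗ (actB H A).flip b) (LinearMap.mulRight ℂ k)
        (Coalgebra.comul (R := ℂ) h) := by
  simp only [smashMul, tau, LinearMap.comp_apply, LinearEquiv.coe_coe, assoc_tmul,
    assoc_symm_tmul, LinearMap.lTensor_tmul, LinearMap.rTensor_tmul]
  induction Coalgebra.comul (R := ℂ) h using TensorProduct.induction_on with
  | zero => simp
  | tmul w v => simp [mu, actB, LinearMap.mul'_apply]
  | add p q hp hq => simp only [map_add, add_tmul, tmul_add, hp, hq]

variable {H A} in
open Pointwise in
lemma smashMul_tmul_mem_absConvexHullOld {U : Set A} (hU : U * U ⊆ U) {V : Set H}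
    (hV : V * V ⊆ V) {W : Set H} (hW : ∀ w ∈ W, ∀ u ∈ U, w • u ∈ U) {a b : A} (ha : a ∈ U)
    (hb : b ∈ U) {h k : H}
    (hh : Coalgebra.comul (R := ℂ) h ∈ absConvexHullOld ℂ (Set.image2 (· ⊗ₜ[ℂ] ·) W V))
    (hk : k ∈ V) :
    smashMul H A ((a ⊗ₜ[ℂ] h) ⊗ₜ[ℂ] (b ⊗ₜ[ℂ] k)) ∈
      absConvexHullOld ℂ (Set.image2 (· ⊗ₜ[ℂ] ·) U V) := by
  rw [smashMul_tmul]
  refine mapsTo_absConvexHullOld _ ?_ hh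
  rintro _ ⟨w, hw, v, hv, rfl⟩
  refine subset_absConvexHullOld ⟨a * (w • b), hU (Set.mul_mem_mul ha (hW w hw b hb)), v * k,
    hV (Set.mul_mem_mul hv hk), ?_⟩
  simp [actB]

end SmashProduct

open Pointwise in
theorem arens_michael_stmt9
    (U : Set A) (hUidem : U * U ⊆ U)
    (V : Set H) (hVidem : V * V ⊆ V)
    (W : Set H) (hW : W = {w : H | ∀ u ∈ U, mu H A (w ⊗ₜ[ℂ] u) ∈ U})
    (V' : Set H) (hV' : V' = (Coalgebra.comul (R := ℂ) (A := H)) ⁻¹'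
      (absConvexHullOld ℂ (Set.image2 (fun (w : H) (v : H) => w ⊗ₜ[ℂ] v) W V))) :
    ∀ x ∈ absConvexHullOld ℂ (Set.image2 (fun (u : A) (v : H) => u ⊗ₜ[ℂ] v) U V'),
      ∀ y ∈ absConvexHullOld ℂ (Set.image2 (fun (u : A) (v : H) => u ⊗ₜ[ℂ] v) U V),
        smashMul H A (x ⊗ₜ[ℂ] y) ∈
          absConvexHullOld ℂ (Set.image2 (fun (u : A) (v : H) => u ⊗ₜ[ℂ] v) U V) := by
  subst hW hV'
  refine bilinear_mem_absConvexHullOld ((TensorProduct.mk ℂ _ _).compr₂ (smashMul H A)) ?_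
  rintro _ ⟨a, ha, h, hh, rfl⟩ _ ⟨b, hb, k, hk, rfl⟩
  have hW : ∀ w ∈ {w : H | ∀ u ∈ U, mu H A (w ⊗ₜ[ℂ] u) ∈ U}, ∀ u ∈ U, w • u ∈ U :=
    fun _ hw u hu => hw u hu
  exact smashMul_tmul_mem_absConvexHullOld hUidem hVidem hW ha hb hh hk

end
end
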